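/- arXiv:2501.00640 — 10 statements merged into one kernel-verified Lean document; each statement's English description precedes it below -/
import Mathlib

section
/- Let n be a positive integer and let p₁, p₂, q₁, q₂ be distinct primes with positive integers α₁, α₂, β₁, β₂. Suppose a, b are positive integers with a/gcd(a,n) = p₁^α₁ · p₂^α₂ and b/gcd(b,n) = q₁^β₁ · q₂^β₂, and suppose ⌊n/p₁^(v_{p₁}(n)+1)⌋ = ⌊n/q₁^(v_{q₁}(n)+1)⌋ and ⌊n/p₂^(v_{p₂}(n)+1)⌋ = ⌊n/q₂^(v_{q₂}(n)+1)⌋, where moreover p₁^(v_{p₁}(n)+1) and q₁^(v_{q₁}(n)+1) lie in a common interval (n/(i+1), n/i] and p₂^(v_{p₂}(n)+1) and q₂^(v_{q₂}(n)+1) lie in a common interval (n/(j+1), n/j] for some positive integers i, j. Then a > n or b > n. -/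
lemma pairA (n i x z : ℕ) (hxz : x < z) (hzi : z * i ≤ n) (hx : n < x * (i+1)) :
    i * i + 2 * i ≤ n := by nlinarith

lemma pairB (n i x z : ℕ) (hi : 0 < i) (hxz : x + 2 ≤ z) (hzi : z * i ≤ n)
    (hx : n < x * (i+1)) (hn2 : n < (i+1) * (i+1)) : False := by nlinarith

lemma ppne (p q s t : ℕ) (hp : p.Prime) (hq : q.Prime) (hpq : p ≠ q) :
    p ^ (s+1) ≠ q ^ (t+1) := by
  intro h
  have : p ∣ q ^ (t+1) := h ▸ dvd_pow_self p (Nat.succ_ne_zero s)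
  exact hpq ((Nat.prime_dvd_prime_iff_eq hp hq).mp (hp.dvd_of_dvd_pow this))

lemma keydvd (a n p q α β : ℕ) (ha : 0 < a) (hn : 0 < n) (hp : p.Prime) (hq : q.Prime)
    (hpq : p ≠ q) (hα : 0 < α) (hred : a / Nat.gcd a n = p ^ α * q ^ β) :
    p ^ (n.factorization p + 1) ∣ a := by
  have hg := Nat.gcd_dvd_left a n
  have ha0 : a ≠ 0 := ha.ne'
  have hn0 : n ≠ 0 := hn.ne'
  have h1 : (a / Nat.gcd a n).factorization p = α := by
    rw [hred, Nat.factorization_mul (pow_ne_zero _ hp.pos.ne') (pow_ne_zero _ hq.pos.ne')]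
    simp [hp.factorization_pow, hq.factorization_pow, Finsupp.single_apply, hpq,
      (Ne.symm hpq)]
  have h2 : (a / Nat.gcd a n).factorization p
      = a.factorization p - (Nat.gcd a n).factorization p := by
    rw [Nat.factorization_div hg]; simp
  have h3 : (Nat.gcd a n).factorization p
      = min (a.factorization p) (n.factorization p) := by
    rw [Nat.factorization_gcd ha0 hn0]; simp [Finsupp.inf_apply]
  rw [h2, h3] at h1
  exact (Nat.Prime.pow_dvd_iff_le_factorization hp ha0).mpr (by omega)

lemma ijle (n i j : ℕ) (hi : 0 < i) (h1 : i * i + 2 * i ≤ n)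
    (h2 : n < (i + 1) * (j + 1)) : i ≤ j := by nlinarith

lemma realbnd (n i P : ℕ) (hi : 0 < i)
    (h1 : (n : ℝ) / (i + 1) < (P : ℝ)) (h2 : (P : ℝ) ≤ (n : ℝ) / i) :
    P * i ≤ n ∧ n < P * (i + 1) := by
  have hi' : (0:ℝ) < (i:ℝ) := by exact_mod_cast hi
  constructor
  · have := (le_div_iff₀ hi').mp h2
    exact_mod_cast this
  · have := (div_lt_iff₀ (by positivity)).mp h1
    exact_mod_cast this

theorem stmt_6 (n a b p₁ p₂ q₁ q₂ α₁ α₂ β₁ β₂ i j : ℕ)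
    (hn : 0 < n) (ha : 0 < a) (hb : 0 < b)
    (hp₁ : p₁.Prime) (hp₂ : p₂.Prime) (hq₁ : q₁.Prime) (hq₂ : q₂.Prime)
    (hd₁ : p₁ ≠ p₂) (hd₂ : p₁ ≠ q₁) (hd₃ : p₁ ≠ q₂) (hd₄ : p₂ ≠ q₁)
    (hd₅ : p₂ ≠ q₂) (hd₆ : q₁ ≠ q₂)
    (hα₁ : 0 < α₁) (hα₂ : 0 < α₂) (hβ₁ : 0 < β₁) (hβ₂ : 0 < β₂)
    (hi : 0 < i) (hj : 0 < j)
    (hared : a / Nat.gcd a n = p₁ ^ α₁ * p₂ ^ α₂)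
    (hbred : b / Nat.gcd b n = q₁ ^ β₁ * q₂ ^ β₂)
    (hfloor₁ : n / p₁ ^ (n.factorization p₁ + 1) = n / q₁ ^ (n.factorization q₁ + 1))
    (hfloor₂ : n / p₂ ^ (n.factorization p₂ + 1) = n / q₂ ^ (n.factorization q₂ + 1))
    (hint₁p : (n : ℝ) / (i + 1) < p₁ ^ (n.factorization p₁ + 1) ∧
              (p₁ : ℝ) ^ (n.factorization p₁ + 1) ≤ (n : ℝ) / i)
    (hint₁q : (n : ℝ) / (i + 1) < q₁ ^ (n.factorization q₁ + 1) ∧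
              (q₁ : ℝ) ^ (n.factorization q₁ + 1) ≤ (n : ℝ) / i)
    (hint₂p : (n : ℝ) / (j + 1) < p₂ ^ (n.factorization p₂ + 1) ∧
              (p₂ : ℝ) ^ (n.factorization p₂ + 1) ≤ (n : ℝ) / j)
    (hint₂q : (n : ℝ) / (j + 1) < q₂ ^ (n.factorization q₂ + 1) ∧
              (q₂ : ℝ) ^ (n.factorization q₂ + 1) ≤ (n : ℝ) / j) :
    n < a ∨ n < b := by
  by_contra hcon
  push_neg at hcon
  obtain ⟨han, hbn⟩ := hcon
  set e₁ := n.factorization p₁ with he₁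
  set e₂ := n.factorization p₂ with he₂
  set f₁ := n.factorization q₁ with hf₁
  set f₂ := n.factorization q₂ with hf₂
  set A := p₁ ^ (e₁ + 1) with hA
  set B := p₂ ^ (e₂ + 1) with hB
  set C := q₁ ^ (f₁ + 1) with hC
  set D := q₂ ^ (f₂ + 1) with hD
  -- divisibility
  have hAa : A ∣ a := keydvd a n p₁ p₂ α₁ α₂ ha hn hp₁ hp₂ hd₁ hα₁ hared
  have hBa : B ∣ a := keydvd a n p₂ p₁ α₂ α₁ ha hn hp₂ hp₁ (Ne.symm hd₁) hα₂
    (by rw [hared]; ring)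
  have hCb : C ∣ b := keydvd b n q₁ q₂ β₁ β₂ hb hn hq₁ hq₂ hd₆ hβ₁ hbred
  have hDb : D ∣ b := keydvd b n q₂ q₁ β₂ β₁ hb hn hq₂ hq₁ (Ne.symm hd₆) hβ₂
    (by rw [hbred]; ring)
  have hcopAB : Nat.Coprime A B :=
    ((Nat.coprime_primes hp₁ hp₂).mpr hd₁).pow _ _
  have hcopCD : Nat.Coprime C D :=
    ((Nat.coprime_primes hq₁ hq₂).mpr hd₆).pow _ _
  have hABn : A * B ≤ n := le_trans (Nat.le_of_dvd ha (hcopAB.mul_dvd_of_dvd_of_dvd hAa hBa)) han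
  have hCDn : C * D ≤ n := le_trans (Nat.le_of_dvd hb (hcopCD.mul_dvd_of_dvd_of_dvd hCb hDb)) hbn
  -- interval bounds as naturals
  have cA : A * i ≤ n ∧ n < A * (i + 1) := by
    refine realbnd n i A hi ?_ ?_ <;> [exact_mod_cast hint₁p.1; exact_mod_cast hint₁p.2]
  have cC : C * i ≤ n ∧ n < C * (i + 1) := by
    refine realbnd n i C hi ?_ ?_ <;> [exact_mod_cast hint₁q.1; exact_mod_cast hint₁q.2]
  have cB : B * j ≤ n ∧ n < B * (j + 1) := by
    refine realbnd n j B hj ?_ ?_ <;> [exact_mod_cast hint₂p.1; exact_mod_cast hint₂p.2]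
  have cD : D * j ≤ n ∧ n < D * (j + 1) := by
    refine realbnd n j D hj ?_ ?_ <;> [exact_mod_cast hint₂q.1; exact_mod_cast hint₂q.2]
  -- n < (i+1)(j+1)
  have hnij : n < (i + 1) * (j + 1) := by
    have h1 : n * n < (A * (i+1)) * (B * (j+1)) :=
      mul_lt_mul'' cA.2 cB.2 (Nat.zero_le _) (Nat.zero_le _)
    have h2 : (A * (i+1)) * (B * (j+1)) = (A * B) * ((i+1) * (j+1)) := by ring
    have h3 : n * n < n * ((i+1) * (j+1)) := by
      rw [h2] at h1
      exact lt_of_lt_of_le h1 (Nat.mul_le_mul_right _ hABn)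
    exact Nat.lt_of_mul_lt_mul_left h3
  -- i*i + 2i ≤ n and j*j + 2j ≤ n
  have hAC : A ≠ C := ppne p₁ q₁ e₁ f₁ hp₁ hq₁ hd₂
  have hBD : B ≠ D := ppne p₂ q₂ e₂ f₂ hp₂ hq₂ hd₅
  have hni : i * i + 2 * i ≤ n := by
    rcases lt_or_gt_of_ne hAC with h | h
    · exact pairA n i A C h cC.1 cA.2
    · exact pairA n i C A h cA.1 cC.2
  have hnj : j * j + 2 * j ≤ n := by
    rcases lt_or_gt_of_ne hBD with h | h
    · exact pairA n j B D h cD.1 cB.2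
    · exact pairA n j D B h cB.1 cD.2
  -- i = j
  have hij : i = j := by
    have h1 : i ≤ j := ijle n i j hi hni hnij
    have h2 : j ≤ i := ijle n j i hj hnj (by rw [Nat.mul_comm] at hnij; exact hnij)
    omega
  subst hij
  -- final: A, B, C distinct in same interval
  have hAB : A ≠ B := ppne p₁ p₂ e₁ e₂ hp₁ hp₂ hd₁
  have hBC : B ≠ C := ppne p₂ q₁ e₂ f₁ hp₂ hq₁ hd₄
  have hn2 : n < (i + 1) * (i + 1) := hnij
  have hdisj : A + 2 ≤ B ∨ B + 2 ≤ A ∨ A + 2 ≤ C ∨ C + 2 ≤ A ∨ B + 2 ≤ C ∨ C + 2 ≤ B := by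
    omega
  rcases hdisj with h | h | h | h | h | h
  · exact pairB n i A B hi h cB.1 cA.2 hn2
  · exact pairB n i B A hi h cA.1 cB.2 hn2
  · exact pairB n i A C hi h cC.1 cA.2 hn2
  · exact pairB n i C A hi h cA.1 cC.2 hn2
  · exact pairB n i B C hi h cC.1 cB.2 hn2
  · exact pairB n i C B hi h cB.1 cC.2 hn2
end

section
/- Let n be a positive integer and u ∈ {1, …, n}. Then gcd(u, v) divides n for all v ∈ {1, …, n} with v ≠ u if and only if u divides n, or u = p^(v_p(n)+1) for some prime p with n/2 < u < n. -/
theorem stmt_9 (n u : ℕ) (hn : 0 < n) (hu : u ∈ Finset.Icc 1 n) :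
    (∀ v ∈ Finset.Icc 1 n, v ≠ u → Nat.gcd u v ∣ n) ↔
      (u ∣ n ∨ ∃ p : ℕ, p.Prime ∧ u = p ^ (n.factorization p + 1) ∧
        n < 2 * u ∧ u < n) := by
  simp only [Finset.mem_Icc] at hu
  obtain ⟨hu1, hun⟩ := hu
  constructor
  · intro h
    by_cases hdvd : u ∣ n
    · exact Or.inl hdvd
    right
    have hultn : u < n := lt_of_le_of_ne hun (fun he => hdvd (he ▸ dvd_refl n))
    have h2u : n < 2 * u := by
      by_contra hle
      push_neg at hle
      have := h (2 * u) (Finset.mem_Icc.mpr ⟨by omega, hle⟩) (by omega)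
      rw [Nat.gcd_eq_left ⟨2, by ring⟩] at this
      exact hdvd this
    have hprop : ∀ d, d ∣ u → d ≠ u → d ∣ n := by
      intro d hd hne
      have hd1 : 1 ≤ d := Nat.pos_of_dvd_of_pos hd (by omega)
      have hdn : d ≤ n := le_trans (Nat.le_of_dvd (by omega) hd) hun
      have := h d (Finset.mem_Icc.mpr ⟨hd1, hdn⟩) hne
      rwa [Nat.gcd_eq_right hd] at this
    have hu2 : u ≠ 1 := fun he => hdvd (he ▸ one_dvd n)
    obtain ⟨p, hp, hpd⟩ := Nat.exists_prime_and_dvd hu2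
    have hu0 : u ≠ 0 := by omega
    set k := u.factorization p with hk
    have hk1 : 1 ≤ k := (Nat.Prime.pow_dvd_iff_le_factorization hp hu0).mp (by simpa using hpd)
    have hpk : p ^ k ∣ u := Nat.ordProj_dvd u p
    have hm : u / p ^ k ∣ u := Nat.ordCompl_dvd u p
    have heq : u = p ^ k := by
      by_contra hne
      have h1 : p ^ k ∣ n := hprop _ hpk (fun he => hne he.symm)
      have hmne : u / p ^ k ≠ u := by
        intro he
        have hmul : p ^ k * (u / p ^ k) = u := Nat.ordProj_mul_ordCompl_eq_self u p
        rw [he] at hmul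
        have h2 : 2 ≤ p ^ k := Nat.one_lt_pow (by omega) hp.one_lt
        nlinarith
      have h2 : u / p ^ k ∣ n := hprop _ hm hmne
      have hcop : Nat.Coprime (p ^ k) (u / p ^ k) :=
        (Nat.coprime_ordCompl hp hu0).pow_left _
      have : u ∣ n := by
        have := Nat.Coprime.mul_dvd_of_dvd_of_dvd hcop h1 h2
        rwa [Nat.ordProj_mul_ordCompl_eq_self u p] at this
      exact hdvd this
    have hdvdn : p ^ (k - 1) ∣ n := by
      apply hprop
      · exact heq ▸ pow_dvd_pow p (by omega)
      · rw [heq]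
        intro he
        have := Nat.pow_right_injective hp.two_le he
        omega
    have hle : k - 1 ≤ n.factorization p :=
      (Nat.Prime.pow_dvd_iff_le_factorization hp (by omega)).mp hdvdn
    have hnle : ¬ (k ≤ n.factorization p) := by
      intro hle'
      exact hdvd (heq ▸ (Nat.Prime.pow_dvd_iff_le_factorization hp (by omega)).mpr hle')
    have hkval : n.factorization p + 1 = k := by omega
    exact ⟨p, hp, by rw [hkval, ← heq], h2u, hultn⟩
  · rintro (hdvd | ⟨p, hp, hue, h2u, hultn⟩)
    · intro v _ _
      exact dvd_trans (Nat.gcd_dvd_left u v) hdvd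
    · intro v hv hne
      simp only [Finset.mem_Icc] at hv
      have hgd : Nat.gcd u v ∣ p ^ (n.factorization p + 1) := hue ▸ Nat.gcd_dvd_left u v
      obtain ⟨j, hj, hje⟩ := (Nat.dvd_prime_pow hp).mp hgd
      by_cases hja : j ≤ n.factorization p
      · rw [hje]
        exact dvd_trans (pow_dvd_pow p hja) (Nat.ordProj_dvd n p)
      · have hj' : j = n.factorization p + 1 := by omega
        have hgu : Nat.gcd u v = u := by rw [hje, hj', hue]
        have huv : u ∣ v := hgu ▸ Nat.gcd_dvd_right u v
        have hup : 0 < u := by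
          rw [hue]; exact pow_pos hp.pos _
        obtain ⟨c, hc⟩ := huv
        have hc1 : c ≠ 1 := fun he => hne (by rw [hc, he, mul_one])
        have hc0 : c ≠ 0 := by
          intro he; rw [he, mul_zero] at hc; omega
        have : 2 * u ≤ v := by
          calc 2 * u = u * 2 := by ring
          _ ≤ u * c := Nat.mul_le_mul_left u (by omega)
          _ = v := hc.symm
        omega
end

section
/- Let n be a positive integer, p a prime, and u ∈ {1, …, n} such that u/gcd(u,n) = p^k with k > 0. Then the number of v ∈ {1, …, n}, v ≠ u, with gcd(u,v) ∣ n equals n − ⌊n/p^(v_p(n)+1)⌋. -/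
/-!
Put `P = p ^ (v_p(n) + 1)`. Writing `g = gcd(u, n)`, the hypothesis says `u = g p^k` with `p^k`
coprime to `n / g`; as `k > 0`, the whole `p`-part of `n` lies in `g`, so `P ∣ u`, while away from
`p` the prime powers dividing `u` already divide `n`. Hence `gcd(u, v) ∣ n` fails exactly when
`P ∣ v`, and such `v` are never `u`'s neighbours, `u` itself included. The neighbours of `u` are
therefore the `v ≤ n` not divisible by `P`.
-/

def diophDeg (n u : ℕ) : ℕ :=
  ((Finset.Icc 1 n).filter (fun v => v ≠ u ∧ Nat.gcd u v ∣ n)).card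

open Finset

namespace Nat

theorem dvd_mul_div_gcd_self (u n : ℕ) : u ∣ n * (u / gcd u n) := by
  conv_lhs => rw [← Nat.mul_div_cancel' (gcd_dvd_left u n)]
  exact Nat.mul_dvd_mul_right (gcd_dvd_right u n) _

theorem pow_succ_factorization_dvd_of_div_gcd_eq_pow {n u p k : ℕ} (hp : p.Prime) (hk : 0 < k)
    (hred : u / gcd u n = p ^ k) : p ^ (n.factorization p + 1) ∣ u := by
  have hg : 0 < gcd u n := Nat.pos_of_ne_zero fun h => by
    rw [h, Nat.div_zero] at hred
    exact pow_ne_zero k hp.ne_zero hred.symm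
  have hcop : Coprime (p ^ k) (n / gcd u n) := hred ▸ coprime_div_gcd_div_gcd hg
  have hpg : p ^ n.factorization p ∣ gcd u n := by
    refine ((hcop.coprime_dvd_left (dvd_pow_self p hk.ne')).pow_left _).dvd_of_dvd_mul_right ?_
    rw [Nat.mul_div_cancel' (gcd_dvd_right u n)]
    exact ordProj_dvd n p
  rw [← Nat.mul_div_cancel' (gcd_dvd_left u n), hred, pow_succ]
  exact Nat.mul_dvd_mul hpg (dvd_pow_self p hk.ne')

theorem dvd_iff_not_pow_succ_factorization_dvd {n d p j : ℕ} (hn : n ≠ 0) (hp : p.Prime)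
    (hd : d ∣ n * p ^ j) : d ∣ n ↔ ¬ p ^ (n.factorization p + 1) ∣ d := by
  refine ⟨fun hdn hPd => pow_succ_factorization_not_dvd hn hp (hPd.trans hdn), fun hPd => ?_⟩
  rw [dvd_iff_prime_pow_dvd_dvd]
  intro q a hq hqa
  by_cases hqp : q = p
  · subst hqp
    have ha : a ≤ n.factorization q := by
      by_contra! h
      exact hPd ((pow_dvd_pow q h).trans hqa)
    exact (pow_dvd_pow q ha).trans (ordProj_dvd n q)
  · have hcop : Coprime (q ^ a) (p ^ j) := ((coprime_primes hq hp).2 hqp).pow a j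
    exact hcop.dvd_of_dvd_mul_right (hqa.trans hd)

theorem gcd_dvd_iff_not_pow_succ_factorization_dvd {n u v p j : ℕ} (hn : n ≠ 0) (hp : p.Prime)
    (hPu : p ^ (n.factorization p + 1) ∣ u) (hu : u ∣ n * p ^ j) :
    gcd u v ∣ n ↔ ¬ p ^ (n.factorization p + 1) ∣ v := by
  rw [dvd_iff_not_pow_succ_factorization_dvd hn hp ((gcd_dvd_left u v).trans hu), dvd_gcd_iff]
  simp only [hPu, true_and]

theorem card_filter_not_dvd_Icc_one (n m : ℕ) : #{v ∈ Icc 1 n | ¬ m ∣ v} = n - n / m := by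
  have hIcc : Icc 1 n = Ioc 0 n := Icc_add_one_left_eq_Ioc 0 n
  have hsplit := card_filter_add_card_filter_not (s := Icc 1 n) (p := (m ∣ ·))
  rw [hIcc, Ioc_filter_dvd_card_eq_div, card_Ioc] at hsplit
  rw [hIcc]
  omega

end Nat

theorem diophDeg_eq_card_filter_not_dvd {n u p j : ℕ} (hp : p.Prime)
    (hPu : p ^ (n.factorization p + 1) ∣ u) (hu : u ∣ n * p ^ j) :
    diophDeg n u = #{v ∈ Icc 1 n | ¬ p ^ (n.factorization p + 1) ∣ v} := by
  refine congrArg card (filter_congr fun v hv => ?_)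
  have hn : n ≠ 0 := by
    rw [mem_Icc] at hv
    omega
  rw [Nat.gcd_dvd_iff_not_pow_succ_factorization_dvd hn hp hPu hu]
  exact ⟨And.right, fun hPv => ⟨by rintro rfl; exact hPv hPu, hPv⟩⟩

theorem stmt_10_general (n u p k : ℕ) (hp : p.Prime)
    (hk : 0 < k)
    (hred : u / Nat.gcd u n = p ^ k) :
    diophDeg n u = n - n / p ^ (n.factorization p + 1) := by
  have hu : u ∣ n * p ^ k := hred ▸ Nat.dvd_mul_div_gcd_self u n
  rw [diophDeg_eq_card_filter_not_dvd hp
      (Nat.pow_succ_factorization_dvd_of_div_gcd_eq_pow hp hk hred) hu,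
    Nat.card_filter_not_dvd_Icc_one]

theorem stmt_10 (n u p k : ℕ) (hn : 0 < n) (hp : p.Prime)
    (hu : u ∈ Finset.Icc 1 n) (hk : 0 < k)
    (hred : u / Nat.gcd u n = p ^ k) :
    diophDeg n u = n - n / p ^ (n.factorization p + 1) :=
  stmt_10_general n u p k hp hk hred
end

section
/- Let n be a positive integer and u, v distinct elements of {1,…,n} with u ∣ v. If the degrees of u and v in D_n are equal, then for every s ∈ {1,…,n} with s ≠ u and s ≠ v, gcd(s,u) ∣ n if and only if gcd(s,v) ∣ n. -/
theorem stmt_13 (n u v : ℕ) (hn : 0 < n)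
    (hu : u ∈ Finset.Icc 1 n) (hv : v ∈ Finset.Icc 1 n) (hne : u ≠ v)
    (huv : u ∣ v) (hdeg : diophDeg n u = diophDeg n v) :
    ∀ s ∈ Finset.Icc 1 n, s ≠ u → s ≠ v →
      (Nat.gcd s u ∣ n ↔ Nat.gcd s v ∣ n) := by
  intro s hs hsu hsv
  set A := (Finset.Icc 1 n).filter (fun w => w ≠ u ∧ Nat.gcd u w ∣ n) with hA
  set B := (Finset.Icc 1 n).filter (fun w => w ≠ v ∧ Nat.gcd v w ∣ n) with hB
  have hsub : ∀ w, Nat.gcd v w ∣ n → Nat.gcd u w ∣ n := fun w h =>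
    (Nat.dvd_gcd ((Nat.gcd_dvd_left u w).trans huv) (Nat.gcd_dvd_right u w)).trans h
  have himg : B.image (fun t => if t = u then v else t) ⊆ A := by
    intro x hx
    simp only [Finset.mem_image] at hx
    obtain ⟨t, ht, rfl⟩ := hx
    simp only [hB, Finset.mem_filter] at ht
    by_cases htu : t = u
    · subst htu
      simp only [if_pos rfl, hA, Finset.mem_filter]
      refine ⟨hv, hne.symm, ?_⟩
      have h2 := ht.2.2
      rwa [Nat.gcd_comm] at h2
    · simp only [if_neg htu, hA, Finset.mem_filter]
      exact ⟨ht.1, htu, hsub t ht.2.2⟩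
  have hinj : Set.InjOn (fun t => if t = u then v else t) B := by
    intro a ha b hb hab
    simp only [hB, Finset.coe_filter, Set.mem_setOf_eq] at ha hb
    dsimp only at hab
    split_ifs at hab with h1 h2 h2
    · exact h1.trans h2.symm
    · exact absurd hab.symm hb.2.1
    · exact absurd hab ha.2.1
    · exact hab
  have hcard : A.card = B.card := hdeg
  have himcard : (B.image (fun t => if t = u then v else t)).card = A.card := by
    rw [Finset.card_image_of_injOn hinj, hcard]
  have heq : B.image (fun t => if t = u then v else t) = A :=
    Finset.eq_of_subset_of_card_le himg (le_of_eq himcard.symm)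
  constructor
  · intro h
    have hsA : s ∈ A := by
      simp only [hA, Finset.mem_filter]
      exact ⟨hs, hsu, by rwa [Nat.gcd_comm] at h⟩
    rw [← heq] at hsA
    simp only [Finset.mem_image] at hsA
    obtain ⟨t, ht, hts⟩ := hsA
    by_cases htu : t = u
    · rw [if_pos htu] at hts
      exact absurd hts.symm hsv
    · rw [if_neg htu] at hts
      subst hts
      simp only [hB, Finset.mem_filter] at ht
      rw [Nat.gcd_comm]; exact ht.2.2
  · intro h
    exact (Nat.dvd_gcd (Nat.gcd_dvd_left s u) ((Nat.gcd_dvd_right s u).trans huv)).trans h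
end

section
/- Let n be a positive integer and u ∈ {1,…,n}. If the degree of u in D_n is strictly less than n−1, then there exists a prime p such that p^(v_p(n)+1) divides u. -/
theorem stmt_14 (n u : ℕ) (hn : 0 < n) (hu : u ∈ Finset.Icc 1 n)
    (hdeg : diophDeg n u < n - 1) :
    ∃ p : ℕ, p.Prime ∧ p ^ (n.factorization p + 1) ∣ u := by
  by_contra h
  push_neg at h
  have hu1 : 1 ≤ u := (Finset.mem_Icc.mp hu).1
  have hun : u ∣ n := by
    rw [← Nat.factorization_le_iff_dvd (by omega) hn.ne']
    intro p
    by_contra hp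
    push_neg at hp
    have hpm : p ∈ u.primeFactors := by
      rw [← Nat.support_factorization, Finsupp.mem_support_iff]; omega
    have hpp : p.Prime := Nat.prime_of_mem_primeFactors hpm
    exact h p hpp (dvd_trans (pow_dvd_pow p hp) (Nat.ordProj_dvd u p))
  have : diophDeg n u = n - 1 := by
    unfold diophDeg
    have : (Finset.Icc 1 n).filter (fun v => v ≠ u ∧ Nat.gcd u v ∣ n) =
        (Finset.Icc 1 n).filter (fun v => v ≠ u) := by
      apply Finset.filter_congr
      intro v _
      simp only [and_iff_left_iff_imp]
      exact fun _ => dvd_trans (Nat.gcd_dvd_left u v) hun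
    rw [this, Finset.filter_ne', Finset.card_erase_of_mem hu, Nat.card_Icc]
    omega
  omega
end

section
/- Let n be a positive integer, p and q primes, and u = p^t, v = q^k elements of {1,…,n} (t,k ≥ 1) whose degrees in D_n are both less than n−1. Then deg(u) = deg(v) if and only if v_p(n)+1 ≤ t, v_q(n)+1 ≤ k, and ⌊n/p^(v_p(n)+1)⌋ = ⌊n/q^(v_q(n)+1)⌋. -/
/-! A vertex dividing `n` is adjacent to everything, so a prime power `p ^ t` of degree below
`n - 1` has `t > e := v_p(n)`. For such `t`, `gcd (p ^ t) v` is a power of `p` dividing `n`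
exactly when `p ^ (e + 1) ∤ v`, so the non-neighbours of `p ^ t` are precisely the multiples of
`p ^ (e + 1)` in `[1, n]` and `deg (p ^ t) = n - ⌊n / p ^ (e + 1)⌋`. -/

lemma card_Icc_filter_not_dvd (n d : ℕ) :
    ((Finset.Icc 1 n).filter (fun v => ¬ d ∣ v)).card = n - n / d := by
  have hsplit := Finset.card_filter_add_card_filter_not (s := Finset.Ioc 0 n) (d ∣ ·)
  rw [Nat.Ioc_filter_dvd_card_eq_div, Nat.card_Ioc] at hsplit
  rw [← Finset.Icc_add_one_left_eq_Ioc, zero_add] at hsplit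
  omega

lemma diophDeg_eq_of_dvd {n u : ℕ} (hn : n ≠ 0) (hu : u ∣ n) : diophDeg n u = n - 1 := by
  have hpos := Nat.pos_of_ne_zero hn
  have hmem : u ∈ Finset.Icc 1 n :=
    Finset.mem_Icc.mpr ⟨Nat.pos_of_dvd_of_pos hu hpos, Nat.le_of_dvd hpos hu⟩
  have hfilter : (Finset.Icc 1 n).filter (fun v => v ≠ u ∧ Nat.gcd u v ∣ n) =
      (Finset.Icc 1 n).erase u := by
    ext v
    simp only [Finset.mem_filter, Finset.mem_erase]
    exact ⟨fun ⟨hv, hne, _⟩ => ⟨hne, hv⟩,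
      fun ⟨hne, hv⟩ => ⟨hv, hne, (Nat.gcd_dvd_left u v).trans hu⟩⟩
  rw [diophDeg, hfilter, Finset.card_erase_of_mem hmem, Nat.card_Icc, Nat.add_sub_cancel]

lemma gcd_prime_pow_dvd_iff {n p t : ℕ} (v : ℕ) (hn : n ≠ 0) (hp : p.Prime)
    (ht : n.factorization p < t) :
    Nat.gcd (p ^ t) v ∣ n ↔ ¬ p ^ (n.factorization p + 1) ∣ v := by
  have hpow_dvd {s : ℕ} : p ^ s ∣ n ↔ s ≤ n.factorization p :=
    hp.pow_dvd_iff_le_factorization hn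
  constructor
  · intro hgcd hv
    have := hpow_dvd.mp ((Nat.dvd_gcd (pow_dvd_pow p ht) hv).trans hgcd)
    omega
  · intro hv
    obtain ⟨s, -, hs⟩ := (Nat.dvd_prime_pow hp).mp (Nat.gcd_dvd_left (p ^ t) v)
    have hsv : p ^ s ∣ v := hs ▸ Nat.gcd_dvd_right _ _
    rw [hs, hpow_dvd]
    by_contra! hlt
    exact hv ((pow_dvd_pow p hlt).trans hsv)

lemma diophDeg_prime_pow {n p t : ℕ} (hn : n ≠ 0) (hp : p.Prime) (ht : n.factorization p < t) :
    diophDeg n (p ^ t) = n - n / p ^ (n.factorization p + 1) := by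
  rw [diophDeg, ← card_Icc_filter_not_dvd]
  congr 1
  refine Finset.filter_congr fun v _ => ?_
  rw [gcd_prime_pow_dvd_iff v hn hp ht, and_iff_right_iff_imp]
  rintro hv rfl
  exact hv (pow_dvd_pow p ht)

lemma factorization_lt_of_diophDeg_lt {n p t : ℕ} (hn : n ≠ 0) (hp : p.Prime)
    (h : diophDeg n (p ^ t) < n - 1) : n.factorization p < t := by
  by_contra! hle
  rw [diophDeg_eq_of_dvd hn ((hp.pow_dvd_iff_le_factorization hn).mpr hle)] at h
  exact lt_irrefl _ h

theorem stmt_15_general (n p q t k : ℕ) (hn : 0 < n) (hp : p.Prime) (hq : q.Prime)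
    (hdu : diophDeg n (p ^ t) < n - 1) (hdv : diophDeg n (q ^ k) < n - 1) :
    diophDeg n (p ^ t) = diophDeg n (q ^ k) ↔
      (n.factorization p + 1 ≤ t ∧ n.factorization q + 1 ≤ k ∧
        n / p ^ (n.factorization p + 1) = n / q ^ (n.factorization q + 1)) := by
  have htp := factorization_lt_of_diophDeg_lt hn.ne' hp hdu
  have hkq := factorization_lt_of_diophDeg_lt hn.ne' hq hdv
  rw [diophDeg_prime_pow hn.ne' hp htp, diophDeg_prime_pow hn.ne' hq hkq,
    tsub_right_inj (Nat.div_le_self _ _) (Nat.div_le_self _ _)]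
  exact ⟨fun h => ⟨htp, hkq, h⟩, fun h => h.2.2⟩

theorem stmt_15 (n p q t k : ℕ) (hn : 0 < n) (hp : p.Prime) (hq : q.Prime)
    (ht : 1 ≤ t) (hk : 1 ≤ k)
    (hu : p ^ t ∈ Finset.Icc 1 n) (hv : q ^ k ∈ Finset.Icc 1 n)
    (hdu : diophDeg n (p ^ t) < n - 1) (hdv : diophDeg n (q ^ k) < n - 1) :
    diophDeg n (p ^ t) = diophDeg n (q ^ k) ↔
      (n.factorization p + 1 ≤ t ∧ n.factorization q + 1 ≤ k ∧
        n / p ^ (n.factorization p + 1) = n / q ^ (n.factorization q + 1)) :=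
  stmt_15_general n p q t k hn hp hq hdu hdv
end

section
/- Let n be a positive integer, p a prime, and u = p^t, v = p^k elements of {1,…,n} (t,k ≥ 1) whose degrees in D_n are both less than n−1. Then deg(u) = deg(v) if and only if v_p(n)+1 ≤ min(t,k). -/
lemma deg_full (n p t : ℕ) (hp : p.Prime)
    (hle : t ≤ n.factorization p) (hu : p ^ t ∈ Finset.Icc 1 n) :
    diophDeg n (p ^ t) = n - 1 := by
  have hdvd : p ^ t ∣ n := dvd_trans (pow_dvd_pow p hle) (Nat.ordProj_dvd n p)
  have h : ((Finset.Icc 1 n).filter (fun v => v ≠ p ^ t ∧ Nat.gcd (p ^ t) v ∣ n))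
      = (Finset.Icc 1 n).erase (p ^ t) := by
    ext v
    simp only [Finset.mem_filter, Finset.mem_erase]
    constructor
    · rintro ⟨h1, h2, _⟩; exact ⟨h2, h1⟩
    · rintro ⟨h1, h2⟩
      exact ⟨h2, h1, dvd_trans (Nat.gcd_dvd_left _ _) hdvd⟩
  rw [diophDeg, h, Finset.card_erase_of_mem hu, Nat.card_Icc]
  simp

lemma deg_eq_aux (n p t : ℕ) (hn : 0 < n) (hp : p.Prime)
    (hgt : n.factorization p + 1 ≤ t) :
    ((Finset.Icc 1 n).filter (fun v => v ≠ p ^ t ∧ Nat.gcd (p ^ t) v ∣ n))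
      = (Finset.Icc 1 n).filter (fun v => ¬ p ^ (n.factorization p + 1) ∣ v) := by
  set e := n.factorization p with he
  ext v
  simp only [Finset.mem_filter, and_congr_right_iff]
  intro hv
  constructor
  · rintro ⟨hne, hdvd⟩ hcon
    have h1 : p ^ (e+1) ∣ Nat.gcd (p^t) v :=
      Nat.dvd_gcd (pow_dvd_pow p hgt) hcon
    have h2 : p ^ (e+1) ∣ n := h1.trans hdvd
    rw [Nat.Prime.pow_dvd_iff_le_factorization hp hn.ne'] at h2
    omega
  · intro hcon
    constructor
    · rintro rfl
      exact hcon (pow_dvd_pow p hgt)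
    · obtain ⟨s, hs, hgcd⟩ := (Nat.dvd_prime_pow hp).1 (Nat.gcd_dvd_left (p^t) v)
      have hsv : p ^ s ∣ v := hgcd ▸ Nat.gcd_dvd_right _ _
      have hse : s ≤ e := by
        by_contra hcc
        exact hcon ((pow_dvd_pow p (by omega)).trans hsv)
      rw [hgcd]
      exact (pow_dvd_pow p hse).trans (Nat.ordProj_dvd n p)

theorem stmt_16 (n p t k : ℕ) (hn : 0 < n) (hp : p.Prime)
    (ht : 1 ≤ t) (hk : 1 ≤ k)
    (hu : p ^ t ∈ Finset.Icc 1 n) (hv : p ^ k ∈ Finset.Icc 1 n)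
    (hdu : diophDeg n (p ^ t) < n - 1) (hdv : diophDeg n (p ^ k) < n - 1) :
    diophDeg n (p ^ t) = diophDeg n (p ^ k) ↔
      n.factorization p + 1 ≤ min t k := by
  have hgt : n.factorization p + 1 ≤ t := by
    by_contra hc
    rw [deg_full n p t hp (by omega) hu] at hdu
    omega
  have hgk : n.factorization p + 1 ≤ k := by
    by_contra hc
    rw [deg_full n p k hp (by omega) hv] at hdv
    omega
  constructor
  · intro _; omega
  · intro _
    unfold diophDeg
    rw [deg_eq_aux n p t hn hp hgt, deg_eq_aux n p k hn hp hgk]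
end

section
/- Let n be a positive integer, and u, v ∈ {1,…,n} with v = t·u for a positive integer t, where v is not a prime power. Then deg(u) = deg(v) in D_n if and only if for every prime p dividing t, either v_p(n)+1 ≤ v_p(u) or v_p(n)+1 > v_p(v). -/
theorem stmt_17 (n u v t : ℕ) (hn : 0 < n) (ht : 0 < t)
    (hu : u ∈ Finset.Icc 1 n) (hv : v ∈ Finset.Icc 1 n)
    (hvt : v = t * u) (hnp : ¬ IsPrimePow v) :
    diophDeg n u = diophDeg n v ↔
      ∀ p : ℕ, p.Prime → p ∣ t →
        (n.factorization p + 1 ≤ u.factorization p ∨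
          v.factorization p < n.factorization p + 1) := by
  obtain ⟨hu1, hun⟩ := Finset.mem_Icc.mp hu
  obtain ⟨hv1, hvn⟩ := Finset.mem_Icc.mp hv
  have hu0 : u ≠ 0 := by omega
  have hv0 : v ≠ 0 := by omega
  have hn0 : n ≠ 0 := by omega
  have ht0 : t ≠ 0 := by omega
  have huv : u ∣ v := ⟨t, by rw [hvt, mul_comm]⟩
  constructor
  · -- equal degrees → condition (by contradiction)
    intro hdeg
    by_contra hcon
    push_neg at hcon
    obtain ⟨p, hp, hpt, hpu, hpv⟩ := hcon
    set e : ℕ := n.factorization p + 1 with he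
    set w0 : ℕ := p ^ e with hw0def
    have hw0v : w0 ∣ v := (hp.pow_dvd_iff_le_factorization hv0).mpr hpv
    have hw0n : ¬ w0 ∣ n := by
      rw [hp.pow_dvd_iff_le_factorization hn0]; omega
    have hw0pos : 1 ≤ w0 := Nat.one_le_pow _ _ hp.pos
    have hw0le : w0 ≤ n := le_trans (Nat.le_of_dvd (by omega) hw0v) hvn
    have hw0Icc : w0 ∈ Finset.Icc 1 n := Finset.mem_Icc.mpr ⟨hw0pos, hw0le⟩
    have hvw0 : v ≠ w0 := by
      intro h
      exact hnp ⟨p, e, hp.prime, by omega, h.symm⟩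
    have key1 : Nat.gcd u w0 ∣ n := by
      obtain ⟨k, hk, hgcd⟩ := (Nat.dvd_prime_pow hp).mp (Nat.gcd_dvd_right u w0)
      have hk1 : k ≤ u.factorization p :=
        (hp.pow_dvd_iff_le_factorization hu0).mp (hgcd ▸ Nat.gcd_dvd_left u w0)
      have : p ^ k ∣ n := (hp.pow_dvd_iff_le_factorization hn0).mpr (by omega)
      rw [hgcd]; exact this
    have key2 : ¬ Nat.gcd v w0 ∣ n := by
      intro h
      exact hw0n ((Nat.dvd_gcd hw0v dvd_rfl).trans h)
    have hlt : diophDeg n v < diophDeg n u := by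
      by_cases hund : u ∣ n
      · -- u divides n : deg u = n - 1, deg v ≤ n - 2
        have hAu : (Finset.Icc 1 n).filter (fun w => w ≠ u ∧ Nat.gcd u w ∣ n)
            = (Finset.Icc 1 n).erase u := by
          ext w
          simp only [Finset.mem_filter, Finset.mem_erase]
          constructor
          · rintro ⟨h1, h2, _⟩; exact ⟨h2, h1⟩
          · rintro ⟨h1, h2⟩; exact ⟨h2, h1, (Nat.gcd_dvd_left u w).trans hund⟩
        have hdegu : diophDeg n u = n - 1 := by
          unfold diophDeg
          rw [hAu, Finset.card_erase_of_mem hu, Nat.card_Icc]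
          omega
        have hsub : (Finset.Icc 1 n).filter (fun w => w ≠ v ∧ Nat.gcd v w ∣ n)
            ⊆ (((Finset.Icc 1 n).erase v).erase w0) := by
          intro w hw
          simp only [Finset.mem_filter] at hw
          obtain ⟨hwI, hwv, hwg⟩ := hw
          refine Finset.mem_erase.mpr ⟨?_, Finset.mem_erase.mpr ⟨hwv, hwI⟩⟩
          rintro rfl; exact key2 hwg
        have hcard2 : (((Finset.Icc 1 n).erase v).erase w0).card = n - 2 := by
          rw [Finset.card_erase_of_mem
              (Finset.mem_erase.mpr ⟨fun h => hvw0 h.symm, hw0Icc⟩),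
            Finset.card_erase_of_mem hv, Nat.card_Icc]
          omega
        have hdegv : diophDeg n v ≤ n - 2 := by
          unfold diophDeg
          calc _ ≤ (((Finset.Icc 1 n).erase v).erase w0).card :=
                Finset.card_le_card hsub
            _ = n - 2 := hcard2
        have hw0ltv : w0 < v :=
          lt_of_le_of_ne (Nat.le_of_dvd (by omega) hw0v) (fun h => hvw0 h.symm)
        omega
      · -- u does not divide n
        have hvnd : ¬ v ∣ n := fun h => hund (huv.trans h)
        have hAu : (Finset.Icc 1 n).filter (fun w => w ≠ u ∧ Nat.gcd u w ∣ n)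
            = (Finset.Icc 1 n).filter (fun w => Nat.gcd u w ∣ n) := by
          apply Finset.filter_congr
          intro w _
          simp only [and_iff_right_iff_imp]
          intro hg
          rintro rfl; exact hund (by simpa [Nat.gcd_self] using hg)
        have hAv : (Finset.Icc 1 n).filter (fun w => w ≠ v ∧ Nat.gcd v w ∣ n)
            = (Finset.Icc 1 n).filter (fun w => Nat.gcd v w ∣ n) := by
          apply Finset.filter_congr
          intro w _
          simp only [and_iff_right_iff_imp]
          intro hg
          rintro rfl; exact hvnd (by simpa [Nat.gcd_self] using hg)
        have hss : (Finset.Icc 1 n).filter (fun w => Nat.gcd v w ∣ n)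
            ⊂ (Finset.Icc 1 n).filter (fun w => Nat.gcd u w ∣ n) := by
          constructor
          · intro w hw
            simp only [Finset.mem_filter] at hw ⊢
            exact ⟨hw.1, (Nat.dvd_gcd ((Nat.gcd_dvd_left u w).trans huv)
              (Nat.gcd_dvd_right u w)).trans hw.2⟩
          · intro hsub
            have := hsub (Finset.mem_filter.mpr ⟨hw0Icc, key1⟩)
            exact key2 (Finset.mem_filter.mp this).2
        unfold diophDeg
        rw [hAu, hAv]
        exact Finset.card_lt_card hss
    omega
  · -- condition → equal degrees
    intro hcond
    have key : ∀ w ∈ Finset.Icc 1 n, (Nat.gcd u w ∣ n ↔ Nat.gcd v w ∣ n) := by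
      intro w hw
      have hw0 : w ≠ 0 := by
        have := (Finset.mem_Icc.mp hw).1; omega
      constructor
      · intro h
        have hle : (Nat.gcd u w).factorization ≤ n.factorization :=
          (Nat.factorization_le_iff_dvd (Nat.gcd_ne_zero_left hu0) hn0).mpr h
        apply (Nat.factorization_le_iff_dvd (Nat.gcd_ne_zero_left hv0) hn0).mp
        rw [Nat.factorization_gcd hv0 hw0]
        rw [Finsupp.le_def]
        intro q
        rw [Finsupp.inf_apply]
        have hq : u.factorization q ≤ n.factorization q ∨
            w.factorization q ≤ n.factorization q := by
          apply min_le_iff.mp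
          rw [← Finsupp.inf_apply, ← Nat.factorization_gcd hu0 hw0]
          exact Finsupp.le_def.mp hle q
        rw [min_le_iff]
        by_cases hqp : q.Prime
        · have hvq : v.factorization q = t.factorization q + u.factorization q := by
            rw [hvt, Nat.factorization_mul ht0 hu0]; rfl
          by_cases hqt : q ∣ t
          · rcases hcond q hqp hqt with h1 | h2
            · omega
            · omega
          · have : t.factorization q = 0 := Nat.factorization_eq_zero_of_not_dvd hqt
            omega
        · left
          rw [Nat.factorization_eq_zero_of_not_prime v hqp]
          exact Nat.zero_le _
      · intro h
        exact (Nat.dvd_gcd ((Nat.gcd_dvd_left u w).trans huv)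
          (Nat.gcd_dvd_right u w)).trans h
    set B : Finset ℕ := (Finset.Icc 1 n).filter (fun w => Nat.gcd u w ∣ n) with hB
    have hBv : B = (Finset.Icc 1 n).filter (fun w => Nat.gcd v w ∣ n) := by
      apply Finset.filter_congr
      intro w hw
      simpa using key w hw
    have hAu : (Finset.Icc 1 n).filter (fun w => w ≠ u ∧ Nat.gcd u w ∣ n)
        = B.erase u := by
      ext w
      simp only [hB, Finset.mem_filter, Finset.mem_erase]
      tauto
    have hAv : (Finset.Icc 1 n).filter (fun w => w ≠ v ∧ Nat.gcd v w ∣ n)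
        = B.erase v := by
      rw [hBv]
      ext w
      simp only [Finset.mem_filter, Finset.mem_erase]
      tauto
    have huB : u ∈ B ↔ u ∣ n := by
      simp only [hB, Finset.mem_filter, Nat.gcd_self]
      exact ⟨fun h => h.2, fun h => ⟨hu, h⟩⟩
    have hvB : v ∈ B ↔ u ∣ n := by
      simp only [hB, Finset.mem_filter, Nat.gcd_eq_left huv]
      exact ⟨fun h => h.2, fun h => ⟨hv, h⟩⟩
    unfold diophDeg
    rw [hAu, hAv]
    by_cases hund : u ∣ n
    · rw [Finset.card_erase_of_mem (huB.mpr hund),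
        Finset.card_erase_of_mem (hvB.mpr hund)]
    · rw [Finset.erase_eq_of_notMem (fun h => hund (huB.mp h)),
        Finset.erase_eq_of_notMem (fun h => hund (hvB.mp h))]
end

section
/- Let n be a positive integer and u, v ∈ {1,…,n} with u/gcd(u,n) > 1 and v/gcd(v,n) > 1. If u/gcd(u,n) and v/gcd(v,n) have exactly the same set of prime factors, then u and v have equal degrees in D_n. -/
/-!
Writing `v_p` for the `p`-adic valuation, `gcd(u, w) ∣ n` says that `min (v_p u) (v_p w) ≤ v_p n`
for every prime `p`. This is automatic unless `v_p u > v_p n`, i.e. unless `p` divides the reduced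
label `u / gcd(u, n)`; so the neighbourhood of `u` only depends on the prime factors of its reduced
label. A reduced label `> 1` also means `u ∤ n`, so `u` is not adjacent to itself and the condition
`w ≠ u` in the degree can be dropped.
-/

namespace Nat

theorem mem_primeFactors_div_gcd_iff {n u : ℕ} (hn : n ≠ 0) (hu : u ≠ 0) (p : ℕ) :
    p ∈ (u / u.gcd n).primeFactors ↔ n.factorization p < u.factorization p := by
  rw [← support_factorization, Finsupp.mem_support_iff,
    factorization_div (gcd_dvd_left u n), factorization_gcd hu hn]
  simp only [Finsupp.tsub_apply, Finsupp.inf_apply]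
  omega

theorem gcd_dvd_iff_forall_mem_primeFactors_div_gcd {n u w : ℕ} (hn : n ≠ 0) (hu : u ≠ 0)
    (hw : w ≠ 0) :
    u.gcd w ∣ n ↔ ∀ p ∈ (u / u.gcd n).primeFactors, w.factorization p ≤ n.factorization p := by
  rw [← factorization_le_iff_dvd (gcd_ne_zero_left hu) hn, factorization_gcd hu hw,
    Finsupp.le_def]
  simp only [mem_primeFactors_div_gcd_iff hn hu, Finsupp.inf_apply]
  exact forall_congr' fun p => by omega

theorem gcd_dvd_iff_of_primeFactors_div_gcd_eq {n u v w : ℕ} (hn : n ≠ 0) (hu : u ≠ 0)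
    (hv : v ≠ 0) (hw : w ≠ 0)
    (h : (u / u.gcd n).primeFactors = (v / v.gcd n).primeFactors) :
    u.gcd w ∣ n ↔ v.gcd w ∣ n := by
  rw [gcd_dvd_iff_forall_mem_primeFactors_div_gcd hn hu hw,
    gcd_dvd_iff_forall_mem_primeFactors_div_gcd hn hv hw, h]

theorem not_dvd_of_one_lt_div_gcd {n u : ℕ} (h : 1 < u / u.gcd n) : ¬u ∣ n := by
  intro hdvd
  rw [gcd_eq_left hdvd] at h
  rcases eq_or_ne u 0 with rfl | hu
  · simp at h
  · rw [Nat.div_self (pos_of_ne_zero hu)] at h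
    exact h.false

end Nat

theorem diophDeg_eq_card_filter_gcd_dvd {n u : ℕ} (hu : ¬u ∣ n) :
    diophDeg n u = ((Finset.Icc 1 n).filter (fun w => Nat.gcd u w ∣ n)).card := by
  unfold diophDeg
  congr 1
  refine Finset.filter_congr fun w _ => and_iff_right_of_imp ?_
  rintro hw rfl
  exact hu (by simpa using hw)

theorem stmt_18_general (n u v : ℕ)
    (hur : 1 < u / Nat.gcd u n) (hvr : 1 < v / Nat.gcd v n)
    (hpf : (u / Nat.gcd u n).primeFactors = (v / Nat.gcd v n).primeFactors) :
    diophDeg n u = diophDeg n v := by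
  have hu0 : u ≠ 0 := by rintro rfl; simp at hur
  have hv0 : v ≠ 0 := by rintro rfl; simp at hvr
  have hun := Nat.not_dvd_of_one_lt_div_gcd hur
  have hn0 : n ≠ 0 := by rintro rfl; exact hun (dvd_zero u)
  rw [diophDeg_eq_card_filter_gcd_dvd hun,
    diophDeg_eq_card_filter_gcd_dvd (Nat.not_dvd_of_one_lt_div_gcd hvr)]
  refine congrArg Finset.card (Finset.filter_congr fun w hw => ?_)
  have hw0 : w ≠ 0 := Nat.one_le_iff_ne_zero.mp (Finset.mem_Icc.mp hw).1
  exact Nat.gcd_dvd_iff_of_primeFactors_div_gcd_eq hn0 hu0 hv0 hw0 hpf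

theorem stmt_18 (n u v : ℕ) (hn : 0 < n)
    (hu : u ∈ Finset.Icc 1 n) (hv : v ∈ Finset.Icc 1 n)
    (hur : 1 < u / Nat.gcd u n) (hvr : 1 < v / Nat.gcd v n)
    (hpf : (u / Nat.gcd u n).primeFactors = (v / Nat.gcd v n).primeFactors) :
    diophDeg n u = diophDeg n v :=
  stmt_18_general n u v hur hvr hpf
end

section
/- Let n be a positive integer and u, v ∈ {1,…,n} with v = t·u for some positive integer t such that gcd(t,u) = 1 and t ∣ n. Then v/gcd(v,n) = u/gcd(u,n), and consequently u and v have equal degrees in D_n. -/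
namespace Nat

variable {n t u : ℕ}

theorem gcd_mul_left_eq_mul_gcd_of_coprime (hcop : Coprime t u) (htn : t ∣ n) :
    gcd (t * u) n = t * gcd u n := by
  rw [gcd_comm, hcop.gcd_mul, gcd_eq_right htn, gcd_comm]

theorem mul_div_gcd_mul_left_of_coprime (ht : 0 < t) (hcop : Coprime t u) (htn : t ∣ n) :
    t * u / gcd (t * u) n = u / gcd u n := by
  rw [gcd_mul_left_eq_mul_gcd_of_coprime hcop htn, Nat.mul_div_mul_left _ _ ht]

theorem gcd_mul_left_dvd_iff_of_coprime (hcop : Coprime t u) (htn : t ∣ n) (x : ℕ) :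
    gcd (t * u) x ∣ n ↔ gcd u x ∣ n := by
  have hsplit : gcd (t * u) x = gcd t x * gcd u x := by
    rw [gcd_comm, hcop.gcd_mul, gcd_comm x t, gcd_comm x u]
  have hfactors : Coprime (gcd t x) (gcd u x) :=
    hcop.coprime_dvd_left (gcd_dvd_left t x) |>.coprime_dvd_right (gcd_dvd_left u x)
  rw [hsplit]
  exact ⟨(dvd_mul_left _ _).trans,
    hfactors.mul_dvd_of_dvd_of_dvd ((gcd_dvd_left t x).trans htn)⟩

theorem mem_Icc_one_and_dvd_iff : u ∈ Finset.Icc 1 n ∧ u ∣ n ↔ 0 < n ∧ u ∣ n := by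
  rw [Finset.mem_Icc]
  constructor
  · rintro ⟨⟨hu, hun⟩, hdvd⟩
    exact ⟨by omega, hdvd⟩
  · rintro ⟨hn, hdvd⟩
    exact ⟨⟨pos_of_dvd_of_pos hdvd hn, le_of_dvd hn hdvd⟩, hdvd⟩

end Nat

theorem diophDeg_eq_card_erase (n u : ℕ) :
    diophDeg n u = (((Finset.Icc 1 n).filter (fun x => Nat.gcd u x ∣ n)).erase u).card := by
  unfold diophDeg
  congr 1
  ext x
  simp only [Finset.mem_filter, Finset.mem_erase]
  tauto

theorem diophDeg_congr {n u v : ℕ} (h : ∀ x, Nat.gcd u x ∣ n ↔ Nat.gcd v x ∣ n) :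
    diophDeg n u = diophDeg n v := by
  have hself : ∀ w, w ∈ (Finset.Icc 1 n).filter (fun x => Nat.gcd w x ∣ n) ↔ 0 < n ∧ w ∣ n :=
    fun w => by rw [Finset.mem_filter, Nat.gcd_self, Nat.mem_Icc_one_and_dvd_iff]
  have hfilter : (Finset.Icc 1 n).filter (fun x => Nat.gcd v x ∣ n) =
      (Finset.Icc 1 n).filter (fun x => Nat.gcd u x ∣ n) :=
    Finset.filter_congr fun x _ => (h x).symm
  have hmem : u ∈ (Finset.Icc 1 n).filter (fun x => Nat.gcd u x ∣ n) ↔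
      v ∈ (Finset.Icc 1 n).filter (fun x => Nat.gcd u x ∣ n) := by
    -- `gcd w 0 = w`, so `x = 0` detects whether `w ∣ n`
    have hdvd : u ∣ n ↔ v ∣ n := by simpa using h 0
    rw [hself, ← hfilter, hself, hdvd]
  rw [diophDeg_eq_card_erase, diophDeg_eq_card_erase, hfilter, Finset.card_erase_eq_ite,
    Finset.card_erase_eq_ite, if_congr hmem rfl rfl]

theorem stmt_19_general (n u v t : ℕ) (ht : 0 < t)
    (hvt : v = t * u) (hcop : Nat.gcd t u = 1) (htn : t ∣ n) :
    v / Nat.gcd v n = u / Nat.gcd u n ∧ diophDeg n u = diophDeg n v := by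
  subst hvt
  exact ⟨Nat.mul_div_gcd_mul_left_of_coprime ht hcop htn,
    diophDeg_congr fun x => (Nat.gcd_mul_left_dvd_iff_of_coprime hcop htn x).symm⟩

theorem stmt_19 (n u v t : ℕ) (hn : 0 < n) (ht : 0 < t)
    (hu : u ∈ Finset.Icc 1 n) (hv : v ∈ Finset.Icc 1 n)
    (hvt : v = t * u) (hcop : Nat.gcd t u = 1) (htn : t ∣ n) :
    v / Nat.gcd v n = u / Nat.gcd u n ∧ diophDeg n u = diophDeg n v :=
  stmt_19_general n u v t ht hvt hcop htn
end
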